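/- arXiv:1703.02169 — 2 statements merged into one kernel-verified Lean document; each statement's English description precedes it below -/
import Mathlib

section
/- Let $H$ and $T$ be independent exponential random variables with means $1-\beta$ and $\beta$ respectively, where $\beta \in (0,1)$. For positive constants $P_1, P_2, D, S$ with $P_1 > P_2 D$, we have $\mathbb{P}\left[\frac{H P_1}{H P_2 + T(P_1+P_2) + S} < D\right] = 1 - \frac{(1-\beta)(P_1 - P_2 D)}{\beta D (P_1+P_2) + (1-\beta)(P_1 - P_2 D)}\exp\left(-\frac{D S}{(1-\beta)(P_1-P_2 D)}\right)$. -/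
/-!
Almost surely `H, T ≥ 0`, and there the SINR `H P₁ / (H P₂ + T (P₁ + P₂) + S)` lies below `D`
exactly when `H < a T + b` with `a = D (P₁ + P₂) / (P₁ - P₂ D)` and `b = D S / (P₁ - P₂ D)`.
Conditioning on `T`, the exponential tail `P[H ≥ x] = exp (-x / (1 - β))` gives
`P[H ≥ a T + b] = exp (-b / (1 - β)) E[exp (-a T / (1 - β))]`, and the Laplace transform of `T`
is `E[exp (-c T)] = 1 / (1 + β c)`.
-/

open Real MeasureTheory ProbabilityTheory Set

namespace ProbabilityTheory

lemma measurable_exponentialPDF (r : ℝ) : Measurable (exponentialPDF r) :=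
  (measurable_exponentialPDFReal r).ennreal_ofReal

lemma expMeasure_singleton (r c : ℝ) : expMeasure r {c} = 0 :=
  withDensity_absolutelyContinuous _ _ (measure_singleton c)

lemma ae_nonneg_expMeasure (r : ℝ) : ∀ᵐ t ∂expMeasure r, 0 ≤ t := by
  refine ae_iff.mpr ?_
  simp only [not_le]
  exact (withDensity_apply _ measurableSet_Iio).trans (lintegral_exponentialPDF_of_nonpos le_rfl)

lemma expMeasure_Ici {r c : ℝ} (hr : 0 < r) (hc : 0 ≤ c) :
    expMeasure r (Ici c) = ENNReal.ofReal (exp (-(r * c))) := by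
  have := isProbabilityMeasure_expMeasure hr
  have hle : exp (-(r * c)) ≤ 1 := exp_le_one_iff.mpr (by nlinarith)
  rw [← measure_congr (Ioi_ae_eq_Ici' (expMeasure_singleton r c)), ← compl_Iic,
    prob_compl_eq_one_sub measurableSet_Iic, ← ofReal_cdf, cdf_expMeasure_eq hr, if_pos hc,
    ← ENNReal.ofReal_one, ← ENNReal.ofReal_sub _ (by linarith), sub_sub_cancel]

lemma exponentialPDF_mul_exp_neg {r c : ℝ} (hr : 0 < r) (hrc : 0 < r + c) (t : ℝ) :
    exponentialPDF r t * ENNReal.ofReal (exp (-(c * t))) =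
      ENNReal.ofReal (r / (r + c)) * exponentialPDF (r + c) t := by
  rcases lt_or_ge t 0 with ht | ht
  · simp [exponentialPDF_of_neg ht]
  rw [exponentialPDF_of_nonneg ht, exponentialPDF_of_nonneg ht,
    ← ENNReal.ofReal_mul (by positivity), ← ENNReal.ofReal_mul (by positivity)]
  congr 1
  field_simp
  rw [← exp_add]
  ring_nf

lemma lintegral_exp_neg_mul_expMeasure {r c : ℝ} (hr : 0 < r) (hrc : 0 < r + c) :
    ∫⁻ t, ENNReal.ofReal (exp (-(c * t))) ∂expMeasure r = ENNReal.ofReal (r / (r + c)) := by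
  change ∫⁻ t, _ ∂volume.withDensity (exponentialPDF r) = _
  rw [lintegral_withDensity_eq_lintegral_mul _ (measurable_exponentialPDF r) (by fun_prop)]
  simp only [Pi.mul_apply, exponentialPDF_mul_exp_neg hr hrc]
  rw [lintegral_const_mul _ (measurable_exponentialPDF _),
    lintegral_exponentialPDF_eq_one hrc, mul_one]

lemma ae_nonneg_of_map_eq_expMeasure {Ω : Type*} [MeasurableSpace Ω] {μ : Measure Ω}
    {X : Ω → ℝ} {r : ℝ} (hX : Measurable X) (hlaw : μ.map X = expMeasure r) :
    ∀ᵐ ω ∂μ, 0 ≤ X ω :=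
  ae_of_ae_map hX.aemeasurable (hlaw ▸ ae_nonneg_expMeasure r)

lemma measure_affine_le_of_indepFun_expMeasure {Ω : Type*} [MeasurableSpace Ω] {μ : Measure Ω}
    {X Y : Ω → ℝ} {r s a b : ℝ} (hX : Measurable X) (hY : Measurable Y) (hXY : IndepFun X Y μ)
    (hr : 0 < r) (hs : 0 < s) (ha : 0 ≤ a) (hb : 0 ≤ b)
    (hXlaw : μ.map X = expMeasure r) (hYlaw : μ.map Y = expMeasure s) :
    μ {ω | a * Y ω + b ≤ X ω} = ENNReal.ofReal (s / (s + r * a) * exp (-(r * b))) := by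
  have := isProbabilityMeasure_expMeasure hr
  have := isProbabilityMeasure_expMeasure hs
  have hA : MeasurableSet {p : ℝ × ℝ | a * p.1 + b ≤ p.2} := by measurability
  have hjoint : μ.map (fun ω => (Y ω, X ω)) = (expMeasure s).prod (expMeasure r) := by
    rw [← hXlaw, ← hYlaw]
    exact (indepFun_iff_map_prod_eq_prod_map_map' hY.aemeasurable hX.aemeasurable
      (hYlaw ▸ inferInstance) (hXlaw ▸ inferInstance)).mp hXY.symm
  have hslice : ∀ᵐ t ∂expMeasure s,
      expMeasure r (Prod.mk t ⁻¹' {p : ℝ × ℝ | a * p.1 + b ≤ p.2}) =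
        ENNReal.ofReal (exp (-(r * b))) * ENNReal.ofReal (exp (-(r * a * t))) := by
    filter_upwards [ae_nonneg_expMeasure s] with t ht
    rw [show Prod.mk t ⁻¹' {p : ℝ × ℝ | a * p.1 + b ≤ p.2} = Ici (a * t + b) from rfl,
      expMeasure_Ici hr (by positivity), ← ENNReal.ofReal_mul (exp_pos _).le, ← exp_add]
    ring_nf
  calc μ {ω | a * Y ω + b ≤ X ω}
      = (expMeasure s).prod (expMeasure r) {p : ℝ × ℝ | a * p.1 + b ≤ p.2} := by
        rw [← hjoint, Measure.map_apply (hY.prodMk hX) hA]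
        rfl
    _ = ENNReal.ofReal (exp (-(r * b))) *
          ∫⁻ t, ENNReal.ofReal (exp (-(r * a * t))) ∂expMeasure s := by
        rw [Measure.prod_apply hA, lintegral_congr_ae hslice, lintegral_const_mul _ (by fun_prop)]
    _ = ENNReal.ofReal (s / (s + r * a) * exp (-(r * b))) := by
        rw [lintegral_exp_neg_mul_expMeasure hs (by positivity),
          ← ENNReal.ofReal_mul (exp_pos _).le, mul_comm]

end ProbabilityTheory

lemma mul_div_lt_iff_lt_affine {h t P₁ P₂ D S : ℝ} (hh : 0 ≤ h) (ht : 0 ≤ t) (hP₂ : 0 ≤ P₂)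
    (hP : 0 ≤ P₁ + P₂) (hS : 0 < S) (hPD : P₂ * D < P₁) :
    h * P₁ / (h * P₂ + t * (P₁ + P₂) + S) < D ↔
      h < D * (P₁ + P₂) / (P₁ - P₂ * D) * t + D * S / (P₁ - P₂ * D) := by
  have hQ : 0 < P₁ - P₂ * D := by linarith
  have hden : 0 < h * P₂ + t * (P₁ + P₂) + S := by positivity
  rw [div_lt_iff₀ hden, div_mul_eq_mul_div, ← add_div, lt_div_iff₀ hQ]
  constructor <;> intro <;> linarith

/-- Carol's outage probability under `H₁` (Proposition 2): for independent exponentials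
`H` (mean `1-β`) and `T` (mean `β`), with `P₁ > P₂ D`,
`P[H P₁ / (H P₂ + T(P₁+P₂) + S) < D]
 = 1 - ((1-β)(P₁-P₂D))/(βD(P₁+P₂)+(1-β)(P₁-P₂D)) · exp(-DS/((1-β)(P₁-P₂D)))`. -/
theorem stmt_6 {Ω : Type*} [MeasurableSpace Ω] (μ : Measure Ω) [IsProbabilityMeasure μ]
    (H T : Ω → ℝ) (hHm : Measurable H) (hTm : Measurable T)
    (β P1 P2 D S : ℝ) (hβ : β ∈ Set.Ioo (0:ℝ) 1)
    (hP1 : 0 < P1) (hP2 : 0 < P2) (hD : 0 < D) (hS : 0 < S) (hPD : P2 * D < P1)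
    (hH : Measure.map H μ = expMeasure (1 / (1 - β)))
    (hT : Measure.map T μ = expMeasure (1 / β))
    (hindep : IndepFun H T μ) :
    μ {ω | H ω * P1 / (H ω * P2 + T ω * (P1 + P2) + S) < D} =
      ENNReal.ofReal (1 - ((1 - β) * (P1 - P2 * D)) /
          (β * D * (P1 + P2) + (1 - β) * (P1 - P2 * D)) *
        exp (-(D * S) / ((1 - β) * (P1 - P2 * D)))) := by
  obtain ⟨hβ0, hβ1⟩ := hβ
  have h1β : 0 < 1 - β := by linarith
  have hQ : 0 < P1 - P2 * D := by linarith
  set a := D * (P1 + P2) / (P1 - P2 * D)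
  set b := D * S / (P1 - P2 * D)
  have hevent : {ω | H ω * P1 / (H ω * P2 + T ω * (P1 + P2) + S) < D}
      =ᵐ[μ] ({ω | a * T ω + b ≤ H ω}ᶜ : Set Ω) := by
    refine Filter.eventuallyEq_set.mpr ?_
    filter_upwards [ae_nonneg_of_map_eq_expMeasure hHm hH,
      ae_nonneg_of_map_eq_expMeasure hTm hT] with ω hHω hTω
    simpa only [mem_compl_iff, mem_ofPred_eq, not_le] using
      mul_div_lt_iff_lt_affine hHω hTω hP2.le (by linarith) hS hPD
  rw [measure_congr hevent, prob_compl_eq_one_sub (measurableSet_le (by fun_prop) hHm),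
    measure_affine_le_of_indepFun_expMeasure hHm hTm hindep (by positivity) (by positivity)
      (by positivity) (by positivity) hH hT,
    ← ENNReal.ofReal_one, ← ENNReal.ofReal_sub _ (by positivity)]
  congr 3
  · have hQ' : P1 - D * P2 ≠ 0 := by linarith
    unfold a
    field_simp
    ring
  · unfold b
    field_simp
end

section
/- Let $\beta \in (0,1)$, and let $P_{ac}, P_{ab}, D, S > 0$ satisfy $P_{ac} > P_{ab} D$. Then the outage probability under $H_1$, $\delta(H_1) = 1 - \frac{(1-\beta)(P_{ac}-P_{ab}D)}{\beta D(P_{ac}+P_{ab}) + (1-\beta)(P_{ac}-P_{ab}D)}\exp\left(-\frac{DS}{(1-\beta)(P_{ac}-P_{ab}D)}\right)$, strictly exceeds the outage probability under $H_0$, $\delta(H_0) = 1 - \frac{1-\beta}{\beta D + (1-\beta)}\exp\left(-\frac{DS}{(1-\beta)P_{ac}}\right)$, when $P_{ab} > 0$. -/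
open Real

/-! Both factors of Carol's success probability `1 - δ` drop under `H₁`: the covert
signal lowers her effective power from `P_ac` to `P_ac - P_ab D` in the numerator, and
raises the interference term from `P_ac` to `P_ac + P_ab` in the denominator. -/

theorem exp_neg_div_lt_exp_neg_div {c x y : ℝ} (hc : 0 < c) (hx : 0 < x) (hxy : x < y) :
    exp (-c / x) < exp (-c / y) := by
  rw [exp_lt_exp, neg_div, neg_div, neg_lt_neg_iff]
  exact div_lt_div_of_pos_left hc hx hxy

theorem mul_div_add_lt_div_add {a b x y : ℝ} (ha : 0 < a) (hb : 0 < b) (hx : 0 < x)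
    (hxy : x < y) : a * x / (b * y + a * x) < a / (b + a) := by
  have hy : 0 < y := hx.trans hxy
  rw [div_lt_div_iff₀ (by positivity) (by positivity)]
  nlinarith [mul_lt_mul_of_pos_left hxy (mul_pos ha hb)]

theorem stmt_8_general (β Pac Pab D S : ℝ) (hβ : β ∈ Set.Ioo (0:ℝ) 1)
    (hPab : 0 < Pab) (hD : 0 < D) (hS : 0 < S)
    (hPD : Pab * D < Pac) :
    1 - (1 - β) / (β * D + (1 - β)) * exp (-(D * S) / ((1 - β) * Pac)) <
      1 - ((1 - β) * (Pac - Pab * D)) /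
          (β * D * (Pac + Pab) + (1 - β) * (Pac - Pab * D)) *
        exp (-(D * S) / ((1 - β) * (Pac - Pab * D))) := by
  obtain ⟨hβ0, hβ1⟩ := hβ
  have h1β : 0 < 1 - β := sub_pos.2 hβ1
  have hQ : 0 < Pac - Pab * D := sub_pos.2 hPD
  have hPabD : 0 < Pab * D := mul_pos hPab hD
  have hPac : 0 < Pac := hPabD.trans hPD
  have hcoef := mul_div_add_lt_div_add h1β (mul_pos hβ0 hD) hQ
    (by linarith : Pac - Pab * D < Pac + Pab)
  have hexp := exp_neg_div_lt_exp_neg_div (mul_pos hD hS) (mul_pos h1β hQ)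
    (mul_lt_mul_of_pos_left (by linarith : Pac - Pab * D < Pac) h1β)
  have := mul_lt_mul'' hcoef hexp (by positivity) (exp_pos _).le
  linarith

/-- Carol's outage probability under `H₁` strictly exceeds that under `H₀`
when the covert power `P_ab` is positive. -/
theorem stmt_8 (β Pac Pab D S : ℝ) (hβ : β ∈ Set.Ioo (0:ℝ) 1)
    (hPac : 0 < Pac) (hPab : 0 < Pab) (hD : 0 < D) (hS : 0 < S)
    (hPD : Pab * D < Pac) :
    1 - (1 - β) / (β * D + (1 - β)) * exp (-(D * S) / ((1 - β) * Pac)) <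
      1 - ((1 - β) * (Pac - Pab * D)) /
          (β * D * (Pac + Pab) + (1 - β) * (Pac - Pab * D)) *
        exp (-(D * S) / ((1 - β) * (Pac - Pab * D))) :=
  stmt_8_general β Pac Pab D S hβ hPab hD hS hPD
end
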